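/- arXiv:2212.06028 — 2 statements merged into one kernel-verified Lean document; each statement's English description precedes it below -/
import Mathlib

section
/- The function H defined on (0,∞) by H(w) := ((√w + 1)/(√w − 1))·log w for w ≠ 1 and H(1) := 4 satisfies H(u) = H(1/u) for all u > 0 and is increasing on [1,∞); consequently H(u) ≤ H(r) for every r ≥ 1 and every u ∈ [1/r, r]. -/
open Finset

noncomputable section

variable {X : Type*} [Fintype X] [DecidableEq X] [Nonempty X]

/-- Dirichlet form `E(f,g) = (1/2) ∑_{x,y} π(x) Q(x,y) (f(x)-f(y))(g(x)-g(y))`. -/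
def dirichletForm (π : X → ℝ) (Q : X → X → ℝ) (f g : X → ℝ) : ℝ :=
  (1 / 2) * ∑ x : X, ∑ y : X, π x * Q x y * (f x - f y) * (g x - g y)

/-- Mean `E[f] = ∑_x π(x) f(x)`. -/
def mean (π : X → ℝ) (f : X → ℝ) : ℝ := ∑ x : X, π x * f x

/-- Entropy `Ent(f) = E[f log f] - E[f] log E[f]`. -/
def entropy (π : X → ℝ) (f : X → ℝ) : ℝ :=
  mean π (fun x => f x * Real.log (f x)) - mean π f * Real.log (mean π f)

/-- Variance `Var(f) = E[f²] - E[f]²`. -/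
def variance (π : X → ℝ) (f : X → ℝ) : ℝ :=
  mean π (fun x => f x ^ 2) - (mean π f) ^ 2

/-- Total jump rate `Q(x) = ∑_{y ≠ x} Q(x,y)`. -/
def jumpRate (Q : X → X → ℝ) (x : X) : ℝ := ∑ y ∈ univ.erase x, Q x y

/-- Sparsity parameter `p = min_{(x,y) ∈ E} Q(x,y) / max(Q(x), Q(y,x))`. -/
def sparsity (Q : X → X → ℝ) : ℝ :=
  sInf {s : ℝ | ∃ x y : X, x ≠ y ∧ 0 < Q x y ∧
    s = Q x y / max (jumpRate Q x) (Q y x)}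

/-- The transition graph `(X, E)` (symmetric since under reversibility
`Q(x,y) > 0 ↔ Q(y,x) > 0`). -/
def chainGraph (Q : X → X → ℝ) : SimpleGraph X where
  Adj x y := x ≠ y ∧ (0 < Q x y ∨ 0 < Q y x)
  symm := ⟨by intro x y h; exact ⟨h.1.symm, h.2.symm⟩⟩
  loopless := ⟨by intro x h; exact h.1 rfl⟩

/-- Graph distance on `(X, E)`. -/
def graphDist (Q : X → X → ℝ) (x y : X) : ℕ := (chainGraph Q).dist x y

/-- Regularization `f⋆(x) = max_z r^{-d(x,z)} f(z)`. -/
def fStar (Q : X → X → ℝ) (r : ℝ) (f : X → ℝ) (x : X) : ℝ :=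
  univ.sup' univ_nonempty (fun z => r ^ (-(graphDist Q x z : ℤ)) * f z)

/-- `(x,y)` is an allowed transition. -/
def IsEdge (Q : X → X → ℝ) (e : X × X) : Prop := e.1 ≠ e.2 ∧ 0 < Q e.1 e.2

/-- The edge set `E = {(x,y) : x ≠ y, Q(x,y) > 0}` as a finset. -/
def edges (Q : X → X → ℝ) : Finset (X × X) :=
  univ.filter (fun e => e.1 ≠ e.2 ∧ 0 < Q e.1 e.2)

/-- Edge weight `c(x,y) = π(x) Q(x,y)`. -/
def edgeWeight (π : X → ℝ) (Q : X → X → ℝ) (e : X × X) : ℝ := π e.1 * Q e.1 e.2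

/-- Distance between edges: `d(e,e') = ℓ - 1` where `ℓ` is the minimal length of a
path `(x_0, …, x_ℓ)` with `(x_0,x_1) = e` and `(x_{ℓ-1}, x_ℓ) = e'`. -/
def edgeDist (Q : X → X → ℝ) (e e' : X × X) : ℕ :=
  sInf {n : ℕ | ∃ c : ℕ → X, c 0 = e.1 ∧ c 1 = e.2 ∧ c n = e'.1 ∧ c (n + 1) = e'.2 ∧
    ∀ i < n + 1, (chainGraph Q).Adj (c i) (c (i + 1))}

/-- `κ = max_{e' ∈ E} (1/c(e')) ∑_{e ∈ E} c(e) r^{-d(e,e')}`. -/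
def kappa (π : X → ℝ) (Q : X → X → ℝ) (r : ℝ) : ℝ :=
  sSup {k : ℝ | ∃ e' ∈ edges Q, k = (1 / edgeWeight π Q e') *
    ∑ e ∈ edges Q, edgeWeight π Q e * r ^ (-(edgeDist Q e e' : ℤ))}

/-- `H(w) = ((√w + 1)/(√w - 1)) log w` for `w ≠ 1`, and `H(1) = 4`. -/
def Hfun (w : ℝ) : ℝ :=
  if w = 1 then 4 else ((Real.sqrt w + 1) / (Real.sqrt w - 1)) * Real.log w

/-- A function is `r`-regular if `f(x) ≤ r f(y)` across every edge. -/
def IsRRegular (Q : X → X → ℝ) (r : ℝ) (f : X → ℝ) : Prop :=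
  ∀ x y : X, x ≠ y → 0 < Q x y → f x ≤ r * f y

/-- Maximum degree of the graph `(X, E)`. -/
def maxDegree (Q : X → X → ℝ) : ℕ :=
  univ.sup (fun x : X => Nat.card {y : X // (chainGraph Q).Adj x y})

/-- Irreducibility: every state can be reached from every other through allowed
transitions. -/
def MarkovIrreducible (Q : X → X → ℝ) : Prop :=
  ∀ x y : X, Relation.ReflTransGen (fun a b => a ≠ b ∧ 0 < Q a b) x y

/-! With `x = (√w - 1)/(√w + 1)` one has `√w = (1 + x)/(1 - x)`, so the series of
`log (1 + x) - log (1 - x)` turns `H` into the power series `H(w) = 4 ∑ₖ x^(2k)/(2k+1)`, valid for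
every `w > 0`, including `w = 1` (`x = 0`). The substitution `w ↦ w⁻¹` flips the sign of `x`, and
`x ≥ 0` grows with `w ≥ 1`, so both claims are read off the series term by term. -/

open Real

theorem hasSum_pow_even_div_odd {x : ℝ} (hx : |x| < 1) (hx0 : x ≠ 0) :
    HasSum (fun k : ℕ => x ^ (2 * k) / (2 * k + 1)) ((log (1 + x) - log (1 - x)) / (2 * x)) := by
  refine ((hasSum_log_sub_log_of_abs_lt_one hx).div_const (2 * x)).congr_fun fun k => ?_
  rw [pow_succ]
  field_simp

def Hparam (w : ℝ) : ℝ := (√w - 1) / (√w + 1)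

theorem Hparam_monotone : Monotone Hparam := by
  intro a b hab
  have hs : √a ≤ √b := sqrt_le_sqrt hab
  have ha : 0 < √a + 1 := by positivity
  have hb : 0 < √b + 1 := by positivity
  rw [Hparam, Hparam, div_le_div_iff₀ ha hb]
  nlinarith

theorem Hparam_nonneg {w : ℝ} (hw : 1 ≤ w) : 0 ≤ Hparam w := by
  have : 1 ≤ √w := one_le_sqrt.mpr hw
  unfold Hparam
  exact div_nonneg (by linarith) (by positivity)

theorem Hparam_inv {w : ℝ} (hw : 0 < w) : Hparam w⁻¹ = -Hparam w := by
  have hs : 0 < √w := sqrt_pos.mpr hw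
  rw [Hparam, Hparam, sqrt_inv]
  field_simp
  ring

theorem abs_Hparam_lt_one {w : ℝ} (hw : 0 < w) : |Hparam w| < 1 := by
  have hs : 0 < √w := sqrt_pos.mpr hw
  rw [Hparam, abs_div, abs_of_pos (by positivity : 0 < √w + 1), div_lt_one (by positivity)]
  exact abs_sub_lt_iff.mpr ⟨by linarith, by linarith⟩

theorem one_add_Hparam (w : ℝ) : 1 + Hparam w = √w * (1 - Hparam w) := by
  have : √w + 1 ≠ 0 := by positivity
  rw [Hparam]
  field_simp
  ring

theorem hasSum_Hfun {w : ℝ} (hw : 0 < w) :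
    HasSum (fun k : ℕ => 4 * Hparam w ^ (2 * k) / (2 * k + 1)) (Hfun w) := by
  by_cases hw1 : w = 1
  · subst hw1
    convert hasSum_single (f := fun k : ℕ => 4 * Hparam 1 ^ (2 * k) / (2 * k + 1)) 0 _ using 1
    · simp [Hfun, Hparam]
    · intro k hk
      simp [Hparam, hk]
  have hs : 0 < √w := sqrt_pos.mpr hw
  have hs1 : √w - 1 ≠ 0 := sub_ne_zero.mpr fun h => hw1 (sqrt_eq_one.mp h)
  have hx := abs_Hparam_lt_one hw
  have hx0 : Hparam w ≠ 0 := div_ne_zero hs1 (by positivity)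
  have h1x : 1 - Hparam w ≠ 0 := by linarith [(abs_lt.mp hx).2]
  have hH : Hfun w = 4 * ((log (1 + Hparam w) - log (1 - Hparam w)) / (2 * Hparam w)) := by
    rw [one_add_Hparam, log_mul hs.ne' h1x, log_sqrt hw.le, Hfun, if_neg hw1, Hparam]
    field_simp
    ring
  rw [hH]
  exact ((hasSum_pow_even_div_odd hx hx0).mul_left 4).congr_fun fun k => mul_div_assoc _ _ _

theorem Hfun_inv {u : ℝ} (hu : 0 < u) : Hfun u⁻¹ = Hfun u := by
  refine (hasSum_Hfun (inv_pos.mpr hu)).unique ?_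
  convert hasSum_Hfun hu using 2 with k
  rw [Hparam_inv hu, (even_two_mul k).neg_pow]

theorem Hfun_monotoneOn : MonotoneOn Hfun (Set.Ici 1) := by
  intro a ha b hb hab
  have hxa : 0 ≤ Hparam a := Hparam_nonneg ha
  have hxab : Hparam a ≤ Hparam b := Hparam_monotone hab
  refine hasSum_le (fun k => ?_) (hasSum_Hfun (by linarith [ha.out]))
    (hasSum_Hfun (by linarith [hb.out]))
  gcongr

theorem Hfun_symm_and_monotone :
    (∀ u : ℝ, 0 < u → Hfun u = Hfun u⁻¹) ∧
    MonotoneOn Hfun (Set.Ici (1 : ℝ)) ∧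
    (∀ r : ℝ, 1 ≤ r → ∀ u ∈ Set.Icc (1 / r) r, Hfun u ≤ Hfun r) := by
  refine ⟨fun u hu => (Hfun_inv hu).symm, Hfun_monotoneOn, ?_⟩
  rintro r hr u ⟨hru, hur⟩
  have hr0 : 0 < r := by linarith
  have hu0 : 0 < u := lt_of_lt_of_le (by positivity) hru
  rcases le_total 1 u with h1u | hu1
  · exact Hfun_monotoneOn h1u hr hur
  · rw [← Hfun_inv hu0]
    exact Hfun_monotoneOn (one_le_inv₀ hu0 |>.mpr hu1) hr
      ((inv_le_comm₀ hu0 hr0).mpr (one_div r ▸ hru))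
end
end

section
/- For any two edges e, e' ∈ E, the edge weights c(x,y) := π(x)Q(x,y) satisfy c(e) ≤ p^{−d(e,e')}·c(e'); moreover the maximum degree Δ of the graph (X,E) satisfies Δ ≤ 1/p. -/
open Finset

noncomputable section

variable {X : Type*} [Fintype X] [DecidableEq X] [Nonempty X]

/-! Across two consecutive edges `(a,b), (b,c)`, reversibility and the definition of `p` give
`c(a,b) = π(b) Q(b,a) ≤ π(b) Q(b) ≤ p⁻¹ π(b) Q(b,c) = p⁻¹ c(b,c)`; iterating this along a shortest
path from `e` to `e'` gives the first bound. For the degree bound, every neighbour `y` of `x`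
satisfies `Q(x,y) ≥ p Q(x)`, and these rates sum to at most `Q(x)`. -/

section Development

omit [Nonempty X]

variable {π : X → ℝ} {Q : X → X → ℝ}

section Graph

omit [Fintype X] [DecidableEq X]

theorem pos_symm_of_reversible (hπ : ∀ x, 0 < π x) (hrev : ∀ x y, π x * Q x y = π y * Q y x) :
    ∀ x y, 0 < Q x y → 0 < Q y x :=
  fun x y h => pos_of_mul_pos_right (hrev x y ▸ mul_pos (hπ x) h) (hπ y).le

theorem chainGraph_adj_iff (hsymm : ∀ x y, 0 < Q x y → 0 < Q y x) {x y : X} :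
    (chainGraph Q).Adj x y ↔ x ≠ y ∧ 0 < Q x y :=
  ⟨fun ⟨hne, h⟩ => ⟨hne, h.elim id (hsymm y x)⟩, fun ⟨hne, h⟩ => ⟨hne, Or.inl h⟩⟩

theorem MarkovIrreducible.reachable (hirr : MarkovIrreducible Q) (x y : X) :
    (chainGraph Q).Reachable x y :=
  (SimpleGraph.reachable_iff_reflTransGen x y).2 <|
    Relation.ReflTransGen.mono (fun _ _ h => ⟨h.1, Or.inl h.2⟩) _ _ (hirr x y)

theorem MarkovIrreducible.exists_path_edgeDist (hirr : MarkovIrreducible Q) {e e' : X × X}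
    (he : (chainGraph Q).Adj e.1 e.2) (he' : (chainGraph Q).Adj e'.1 e'.2) :
    ∃ c : ℕ → X, c 0 = e.1 ∧ c 1 = e.2 ∧ c (edgeDist Q e e') = e'.1 ∧
      c (edgeDist Q e e' + 1) = e'.2 ∧
      ∀ i < edgeDist Q e e' + 1, (chainGraph Q).Adj (c i) (c (i + 1)) := by
  obtain ⟨p⟩ := hirr.reachable e.2 e'.1
  let w := (p.concat he').cons he
  have hw : w.length = p.length + 2 := by simp [w]
  refine (Nat.sInf_mem ⟨p.length + 1, w.getVert, w.getVert_zero, ?_, ?_, ?_, fun i hi =>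
    w.adj_getVert_succ (by omega)⟩ : edgeDist Q e e' ∈ _)
  · simp [w]
  · simp [w, SimpleGraph.Walk.concat_eq_append, SimpleGraph.Walk.getVert_append]
  · rw [show p.length + 1 + 1 = w.length by omega, SimpleGraph.Walk.getVert_length]

end Graph

theorem adj_of_mem_edges {e : X × X} (he : e ∈ edges Q) : (chainGraph Q).Adj e.1 e.2 :=
  have h := (mem_filter.1 he).2
  ⟨h.1, Or.inl h.2⟩

theorem le_jumpRate (hQ : ∀ x y : X, x ≠ y → 0 ≤ Q x y) {x y : X} (hxy : x ≠ y) :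
    Q x y ≤ jumpRate Q x :=
  single_le_sum (fun z hz => hQ x z (ne_of_mem_erase hz).symm) (mem_erase.2 ⟨hxy.symm, mem_univ y⟩)

theorem finite_sparsity_set :
    {s : ℝ | ∃ x y : X, x ≠ y ∧ 0 < Q x y ∧ s = Q x y / max (jumpRate Q x) (Q y x)}.Finite :=
  (Set.finite_range fun e : X × X => Q e.1 e.2 / max (jumpRate Q e.1) (Q e.2 e.1)).subset
    fun _ ⟨x, y, _, _, hs⟩ => ⟨(x, y), hs.symm⟩

theorem sparsity_le {x y : X} (hxy : x ≠ y) (hpos : 0 < Q x y) :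
    sparsity Q ≤ Q x y / max (jumpRate Q x) (Q y x) :=
  csInf_le finite_sparsity_set.bddBelow ⟨x, y, hxy, hpos, rfl⟩

theorem sparsity_nonneg (hQ : ∀ x y : X, x ≠ y → 0 ≤ Q x y) : 0 ≤ sparsity Q :=
  Real.sInf_nonneg fun _ ⟨x, y, hxy, hpos, hs⟩ =>
    hs ▸ div_nonneg hpos.le ((hQ y x hxy.symm).trans (le_max_right _ _))

theorem sparsity_pos (hsymm : ∀ x y, 0 < Q x y → 0 < Q y x) {x y : X} (hxy : x ≠ y)
    (hpos : 0 < Q x y) : 0 < sparsity Q :=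
  (finite_sparsity_set.lt_csInf_iff ⟨_, x, y, hxy, hpos, rfl⟩).2 fun _ ⟨a, b, _, hab, hs⟩ =>
    hs ▸ div_pos hab (lt_max_of_lt_right (hsymm a b hab))

theorem sparsity_mul_jumpRate_le (hsymm : ∀ x y, 0 < Q x y → 0 < Q y x) {x y : X}
    (hxy : x ≠ y) (hpos : 0 < Q x y) : sparsity Q * jumpRate Q x ≤ Q x y :=
  calc sparsity Q * jumpRate Q x
      ≤ sparsity Q * max (jumpRate Q x) (Q y x) :=
        mul_le_mul_of_nonneg_left (le_max_left _ _) (sparsity_pos hsymm hxy hpos).le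
    _ ≤ Q x y := (le_div_iff₀ (lt_max_of_lt_right (hsymm x y hpos))).1 (sparsity_le hxy hpos)

theorem card_adj_le_one_div_sparsity (hQ : ∀ x y : X, x ≠ y → 0 ≤ Q x y)
    (hsymm : ∀ x y, 0 < Q x y → 0 < Q y x) (x : X) :
    (Nat.card {y : X // (chainGraph Q).Adj x y} : ℝ) ≤ 1 / sparsity Q := by
  classical
  rw [Nat.card_eq_fintype_card, Fintype.card_subtype]
  set N := univ.filter fun y => (chainGraph Q).Adj x y
  rcases N.eq_empty_or_nonempty with hN | ⟨y₀, hy₀⟩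
  · simpa [hN] using sparsity_nonneg hQ
  obtain ⟨hne, hpos⟩ := (chainGraph_adj_iff hsymm).1 (mem_filter.1 hy₀).2
  have hp := sparsity_pos hsymm hne hpos
  have hJ : 0 < jumpRate Q x := hpos.trans_le (le_jumpRate hQ hne)
  have hsum : #N * (sparsity Q * jumpRate Q x) ≤ jumpRate Q x :=
    calc #N * (sparsity Q * jumpRate Q x)
        ≤ ∑ y ∈ N, Q x y := by
          rw [← nsmul_eq_mul]
          refine card_nsmul_le_sum N _ _ fun y hy => ?_
          obtain ⟨hxy, hQxy⟩ := (chainGraph_adj_iff hsymm).1 (mem_filter.1 hy).2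
          exact sparsity_mul_jumpRate_le hsymm hxy hQxy
      _ ≤ jumpRate Q x :=
          sum_le_sum_of_subset_of_nonneg
            (fun y hy => mem_erase.2 ⟨(mem_filter.1 hy).2.1.symm, mem_univ y⟩)
            fun y hy _ => hQ x y (ne_of_mem_erase hy).symm
  rw [le_div_iff₀ hp]
  exact le_of_mul_le_mul_right (by rwa [one_mul, mul_assoc]) hJ

theorem edgeWeight_le_inv_sparsity_mul (hQ : ∀ x y : X, x ≠ y → 0 ≤ Q x y)
    (hπ : ∀ x, 0 < π x) (hrev : ∀ x y, π x * Q x y = π y * Q y x) {a b c : X}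
    (hab : (chainGraph Q).Adj a b) (hbc : (chainGraph Q).Adj b c) :
    edgeWeight π Q (a, b) ≤ (sparsity Q)⁻¹ * edgeWeight π Q (b, c) := by
  have hsymm := pos_symm_of_reversible hπ hrev
  obtain ⟨hbc, hQbc⟩ := (chainGraph_adj_iff hsymm).1 hbc
  have hp := sparsity_pos hsymm hbc hQbc
  have hba : Q b a ≤ (sparsity Q)⁻¹ * Q b c := by
    rw [inv_mul_eq_div, le_div_iff₀ hp, mul_comm]
    exact (mul_le_mul_of_nonneg_left (le_jumpRate hQ hab.1.symm) hp.le).trans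
      (sparsity_mul_jumpRate_le hsymm hbc hQbc)
  calc edgeWeight π Q (a, b) = π b * Q b a := hrev a b
    _ ≤ π b * ((sparsity Q)⁻¹ * Q b c) := mul_le_mul_of_nonneg_left hba (hπ b).le
    _ = (sparsity Q)⁻¹ * edgeWeight π Q (b, c) := by simp only [edgeWeight]; ring

theorem edgeWeight_le_inv_sparsity_pow_mul (hQ : ∀ x y : X, x ≠ y → 0 ≤ Q x y)
    (hπ : ∀ x, 0 < π x) (hrev : ∀ x y, π x * Q x y = π y * Q y x) (c : ℕ → X) (n : ℕ)
    (hc : ∀ i < n + 1, (chainGraph Q).Adj (c i) (c (i + 1))) :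
    edgeWeight π Q (c 0, c 1) ≤ (sparsity Q)⁻¹ ^ n * edgeWeight π Q (c n, c (n + 1)) := by
  induction n with
  | zero => simp
  | succ n ih =>
    calc edgeWeight π Q (c 0, c 1)
        ≤ (sparsity Q)⁻¹ ^ n * edgeWeight π Q (c n, c (n + 1)) :=
          ih fun i hi => hc i (by omega)
      _ ≤ (sparsity Q)⁻¹ ^ n * ((sparsity Q)⁻¹ * edgeWeight π Q (c (n + 1), c (n + 2))) :=
          mul_le_mul_of_nonneg_left
            (edgeWeight_le_inv_sparsity_mul hQ hπ hrev (hc n (by omega)) (hc (n + 1) (by omega)))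
            (pow_nonneg (inv_nonneg.2 (sparsity_nonneg hQ)) n)
      _ = (sparsity Q)⁻¹ ^ (n + 1) * edgeWeight π Q (c (n + 1), c (n + 2)) := by ring

end Development

theorem edgeWeight_comparison_and_maxDegree_general
    (π : X → ℝ) (Q : X → X → ℝ)
    (hQ : ∀ x y : X, x ≠ y → 0 ≤ Q x y)
    (hirr : MarkovIrreducible Q)
    (hπpos : ∀ x : X, 0 < π x)
    (hrev : ∀ x y : X, π x * Q x y = π y * Q y x)
 :
     (∀ e ∈ edges Q, ∀ e' ∈ edges Q,
      edgeWeight π Q e ≤ sparsity Q ^ (-(edgeDist Q e e' : ℤ)) * edgeWeight π Q e') ∧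
    (maxDegree Q : ℝ) ≤ 1 / sparsity Q := by
  refine ⟨fun e he e' he' => ?_, ?_⟩
  · obtain ⟨c, hc0, hc1, hcn, hcn1, hc⟩ :=
      hirr.exists_path_edgeDist (adj_of_mem_edges he) (adj_of_mem_edges he')
    have h := edgeWeight_le_inv_sparsity_pow_mul hQ hπpos hrev c _ hc
    rw [zpow_neg, zpow_natCast, ← inv_pow]
    rwa [hc0, hc1, hcn, hcn1] at h
  · obtain ⟨x, -, hx⟩ := exists_mem_eq_sup univ univ_nonempty
      fun x : X => Nat.card {y : X // (chainGraph Q).Adj x y}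
    rw [maxDegree, hx]
    exact card_adj_le_one_div_sparsity hQ (pos_symm_of_reversible hπpos hrev) x

theorem edgeWeight_comparison_and_maxDegree
    (π : X → ℝ) (Q : X → X → ℝ)
    (hQ : ∀ x y : X, x ≠ y → 0 ≤ Q x y)
    (hQsum : ∀ x : X, ∑ y : X, Q x y = 0)
    (hirr : MarkovIrreducible Q)
    (hπpos : ∀ x : X, 0 < π x)
    (hπsum : ∑ x : X, π x = 1)
    (hrev : ∀ x y : X, π x * Q x y = π y * Q y x)
 :
     (∀ e ∈ edges Q, ∀ e' ∈ edges Q,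
      edgeWeight π Q e ≤ sparsity Q ^ (-(edgeDist Q e e' : ℤ)) * edgeWeight π Q e') ∧
    (maxDegree Q : ℝ) ≤ 1 / sparsity Q :=
  edgeWeight_comparison_and_maxDegree_general π Q hQ hirr hπpos hrev
end
end
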